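/- arXiv:2501.06905 — 3 statements merged into one kernel-verified Lean document; each statement's English description precedes it below -/
import Mathlib

section
/- For every natural number n ≥ 1 and every p ∈ (0,1), the sum over j from 1 to n of (1 - (1-p)^j)/j is at most log(n e) + log p + 1/((n+1) p). -/
/-!
Writing `(1 - (1 - p) ^ j) / j = 1 / j - (1 - p) ^ j / j`, the sum is the harmonic number
`H_n ≤ 1 + log n` minus the `n`-th partial sum of `-log p = ∑_{j ≥ 1} (1 - p) ^ j / j`.
The tail of that series beyond `n` is dominated by the geometric series
`(1 - p) ^ (n + 1) / (n + 1) * ∑_i (1 - p) ^ i = (1 - p) ^ (n + 1) / ((n + 1) p) ≤ 1 / ((n + 1) p)`.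
-/

open Finset Real

lemma sum_Icc_one_eq_sum_range_succ {M : Type*} [AddCommMonoid M] (f : ℕ → M) (n : ℕ) :
    ∑ j ∈ Icc 1 n, f j = ∑ i ∈ range n, f (i + 1) := by
  rw [← Ico_add_one_right_eq_Icc, sum_Ico_eq_sum_range, Nat.add_sub_cancel]
  simp only [add_comm 1]

lemma sum_Icc_one_div_le_one_add_log (n : ℕ) :
    ∑ j ∈ Icc 1 n, 1 / (j : ℝ) ≤ 1 + log n := by
  have h := harmonic_le_one_add_log n
  rw [harmonic_eq_sum_Icc] at h
  simpa [one_div] using h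

lemma sum_Icc_pow_div_eq_neg_log_sub_tail {x : ℝ} (hx : |x| < 1) (n : ℕ) :
    ∑ j ∈ Icc 1 n, x ^ j / j = -log (1 - x) - ∑' i : ℕ, x ^ (i + n + 1) / ((i + n : ℕ) + 1) := by
  have hlog := hasSum_pow_div_log_of_abs_lt_one hx
  have hsplit := hlog.summable.sum_add_tsum_nat_add n
  rw [hlog.tsum_eq] at hsplit
  rw [sum_Icc_one_eq_sum_range_succ, ← hsplit]
  push_cast
  ring

lemma tsum_pow_div_tail_le {x : ℝ} (hx0 : 0 ≤ x) (hx1 : x < 1) (n : ℕ) :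
    ∑' i : ℕ, x ^ (i + n + 1) / ((i + n : ℕ) + 1) ≤ x ^ (n + 1) / ((n + 1) * (1 - x)) := by
  have htail : Summable fun i : ℕ => x ^ (i + n + 1) / ((i + n : ℕ) + 1) :=
    (summable_nat_add_iff n).2 (hasSum_pow_div_log_of_abs_lt_one
      (by rwa [abs_of_nonneg hx0])).summable
  have hgeom : HasSum (fun i : ℕ => x ^ (n + 1) / (n + 1) * x ^ i)
      (x ^ (n + 1) / (n + 1) * (1 - x)⁻¹) :=
    (hasSum_geometric_of_lt_one hx0 hx1).mul_left _
  calc ∑' i : ℕ, x ^ (i + n + 1) / ((i + n : ℕ) + 1)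
      ≤ x ^ (n + 1) / (n + 1) * (1 - x)⁻¹ := by
        refine hasSum_le (fun i => ?_) htail.hasSum hgeom
        rw [div_mul_eq_mul_div, ← pow_add, add_comm (n + 1), ← add_assoc]
        gcongr
        linarith [(i.cast_nonneg : (0 : ℝ) ≤ i)]
    _ = x ^ (n + 1) / ((n + 1) * (1 - x)) := by
        rw [← div_eq_mul_inv, div_div]

theorem sum_one_sub_pow_div_le (n : ℕ) (hn : 1 ≤ n) (p : ℝ) (hp0 : 0 < p) (hp1 : p < 1) :
    ∑ j ∈ Finset.Icc 1 n, (1 - (1 - p) ^ j) / (j : ℝ)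
      ≤ Real.log (n * Real.exp 1) + Real.log p + 1 / ((n + 1 : ℝ) * p) := by
  have hq0 : 0 ≤ 1 - p := by linarith
  have hq1 : 1 - p < 1 := by linarith
  have hsplit : ∑ j ∈ Icc 1 n, (1 - (1 - p) ^ j) / (j : ℝ)
      = ∑ j ∈ Icc 1 n, 1 / (j : ℝ) - ∑ j ∈ Icc 1 n, (1 - p) ^ j / (j : ℝ) := by
    rw [← sum_sub_distrib]
    simp only [sub_div]
  have htail := tsum_pow_div_tail_le hq0 hq1 n
  have htail_le : (1 - p) ^ (n + 1) / ((n + 1) * (1 - (1 - p))) ≤ 1 / ((n + 1 : ℝ) * p) := by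
    rw [sub_sub_cancel]
    gcongr
    exact pow_le_one₀ hq0 hq1.le
  rw [hsplit, sum_Icc_pow_div_eq_neg_log_sub_tail (by rwa [abs_of_nonneg hq0]), sub_sub_cancel,
    log_mul (Nat.cast_ne_zero.2 (Nat.one_le_iff_ne_zero.1 hn)) (exp_ne_zero 1), log_exp]
  linarith [sum_Icc_one_div_le_one_add_log n]
end

section
/- For natural numbers k0 ≤ k ≤ x ≤ n with k0 ≥ 1, the ratio C(x-1, k-1)/C(n-1, k-1) is at most C(x-1, k0)/C(n-1, k0), which in turn is at most (x/n)^{k0}. -/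
/-!
With `m = x - 1 ≤ N = n - 1`, the ratio `C(m, j) / C(N, j)` is the product of the factors
`(m - i) / (N - i)` for `i < j`. Each factor is at most `1`, so the ratio decreases in `j`, and
at most `m / N ≤ (m + 1) / (N + 1) = x / n`, so the ratio is at most `(x / n) ^ j`.
-/

namespace Nat

variable {K : Type*} [Field K] [LinearOrder K] [IsStrictOrderedRing K]

theorem cast_choose_succ_div_cast_choose_succ (m N j : ℕ) :
    (m.choose (j + 1) : K) / N.choose (j + 1) =
      (m.choose j : K) / N.choose j * (((m - j : ℕ) : K) / (N - j : ℕ)) := by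
  have hj : (j + 1 : K) ≠ 0 := by positivity
  rw [← mul_div_mul_right _ _ hj, ← mul_div_mul_comm]
  have hm : (m.choose (j + 1) * (j + 1) : K) = m.choose j * (m - j : ℕ) := by
    exact_mod_cast choose_succ_right_eq m j
  have hN : (N.choose (j + 1) * (j + 1) : K) = N.choose j * (N - j : ℕ) := by
    exact_mod_cast choose_succ_right_eq N j
  rw [hm, hN]

variable {m N : ℕ}

theorem antitone_cast_choose_div_cast_choose (hmN : m ≤ N) :
    Antitone fun j ↦ (m.choose j : K) / N.choose j := by
  refine antitone_nat_of_succ_le fun j ↦ ?_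
  rw [cast_choose_succ_div_cast_choose_succ]
  refine mul_le_of_le_one_right (by positivity) (div_le_one_of_le₀ ?_ (by positivity))
  exact_mod_cast Nat.sub_le_sub_right hmN j

theorem cast_sub_div_cast_sub_le_div (hmN : m ≤ N) (j : ℕ) :
    ((m - j : ℕ) : K) / (N - j : ℕ) ≤ (m : K) / N := by
  rcases le_or_gt N j with hNj | hjN
  · rw [Nat.sub_eq_zero_of_le hNj, cast_zero, div_zero]
    positivity
  rw [div_le_div_iff₀ (mod_cast Nat.sub_pos_of_lt hjN) (mod_cast j.zero_le.trans_lt hjN)]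
  have h : (m - j) * N ≤ m * (N - j) := by
    rw [Nat.sub_mul, Nat.mul_sub, mul_comm j N]
    exact Nat.sub_le_sub_left (Nat.mul_le_mul_right j hmN) _
  exact_mod_cast h

theorem cast_choose_div_cast_choose_le_pow (hmN : m ≤ N) (j : ℕ) :
    (m.choose j : K) / N.choose j ≤ ((m : K) / N) ^ j := by
  induction j with
  | zero => simp
  | succ j ih =>
    rw [cast_choose_succ_div_cast_choose_succ, pow_succ]
    exact mul_le_mul ih (cast_sub_div_cast_sub_le_div hmN j) (by positivity) (by positivity)

end Nat

theorem div_le_add_one_div_add_one {K : Type*} [Field K] [LinearOrder K] [IsStrictOrderedRing K]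
    {a b : K} (ha : 0 ≤ a) (hab : a ≤ b) : a / b ≤ (a + 1) / (b + 1) := by
  rcases ha.eq_or_lt with rfl | ha
  · rw [zero_div]
    positivity
  rw [div_le_div_iff₀ (ha.trans_le hab) (by linarith)]
  linarith

theorem choose_ratio_le_general (k0 k x n : ℕ) (hk0k : k0 < k) (hkx : k ≤ x) (hxn : x ≤ n) :
    (Nat.choose (x - 1) (k - 1) : ℝ) / Nat.choose (n - 1) (k - 1)
        ≤ (Nat.choose (x - 1) k0 : ℝ) / Nat.choose (n - 1) k0
      ∧ (Nat.choose (x - 1) k0 : ℝ) / Nat.choose (n - 1) k0 ≤ ((x : ℝ) / n) ^ k0 := by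
  have hx : 0 < x := by omega
  have hmN : x - 1 ≤ n - 1 := Nat.sub_le_sub_right hxn 1
  refine ⟨Nat.antitone_cast_choose_div_cast_choose hmN (by omega), ?_⟩
  calc _ ≤ (((x - 1 : ℕ) : ℝ) / (n - 1 : ℕ)) ^ k0 := Nat.cast_choose_div_cast_choose_le_pow hmN k0
    _ ≤ ((((x - 1 : ℕ) : ℝ) + 1) / (((n - 1 : ℕ) : ℝ) + 1)) ^ k0 :=
      pow_le_pow_left₀ (by positivity)
        (div_le_add_one_div_add_one (Nat.cast_nonneg _) (Nat.cast_le.mpr hmN)) k0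
    _ = ((x : ℝ) / n) ^ k0 := by
      rw [Nat.cast_pred hx, Nat.cast_pred (hx.trans_le hxn), sub_add_cancel, sub_add_cancel]

theorem choose_ratio_le (k0 k x n : ℕ) (hk0 : 1 ≤ k0) (hk0k : k0 < k) (hkx : k ≤ x) (hxn : x ≤ n) :
    (Nat.choose (x - 1) (k - 1) : ℝ) / Nat.choose (n - 1) (k - 1)
        ≤ (Nat.choose (x - 1) k0 : ℝ) / Nat.choose (n - 1) k0
      ∧ (Nat.choose (x - 1) k0 : ℝ) / Nat.choose (n - 1) k0 ≤ ((x : ℝ) / n) ^ k0 :=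
  choose_ratio_le_general k0 k x n hk0k hkx hxn
end

section
/- For 0 < p < 1 and positive integers k ≤ n with k ≥ (1+ε)(n-1)p + 1 where 0 < ε ≤ 1, the integral ∫_0^p η^{k-1} (1-η)^{n-k} dη is at most (1-p)/((n-1)ε) * p^{k-1} (1-p)^{n-k}. -/
/-!
On `(0, 1)` write `η ^ i * (1 - η) ^ j = η ^ m * (η ^ a * (1 - η) ^ j)` with `a = j p / (1 - p)` and
`m = i - a`. The second factor is maximal at `η = a / (a + j) = p`, so on `(0, p)` the integrand is
dominated by `p ^ i * (1 - p) ^ j * (η / p) ^ m`, whose integral over `(0, p)` is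
`p ^ i * (1 - p) ^ j * p / (m + 1)`. For `i = k - 1`, `j = n - k` one has
`(1 - p) (m + 1) = k - n p ≥ ε (n - 1) p`.
-/

open Real intervalIntegral

lemma rpow_mul_one_sub_rpow_le {a c p η : ℝ} (ha : 0 ≤ a) (hc : 0 ≤ c) (hp0 : 0 < p) (hp1 : p < 1)
    (hη0 : 0 < η) (hη1 : η < 1) (hac : a * (1 - p) = c * p) :
    η ^ a * (1 - η) ^ c ≤ p ^ a * (1 - p) ^ c := by
  have h1p : 0 < 1 - p := by linarith
  have h1η : 0 < 1 - η := by linarith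
  rw [← log_le_log_iff (by positivity) (by positivity), log_mul (by positivity) (by positivity),
    log_mul (by positivity) (by positivity), log_rpow hη0, log_rpow h1η, log_rpow hp0,
    log_rpow h1p]
  -- `log x ≤ x - 1` at `η / p` and `(1 - η) / (1 - p)`; the two linear bounds cancel since `a / c = p / (1 - p)`
  have hη : log η - log p ≤ η / p - 1 := by
    rw [← log_div hη0.ne' hp0.ne']; exact log_le_sub_one_of_pos (by positivity)
  have h1 : log (1 - η) - log (1 - p) ≤ (1 - η) / (1 - p) - 1 := by
    rw [← log_div h1η.ne' h1p.ne']; exact log_le_sub_one_of_pos (by positivity)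
  have hcancel : a * (η / p - 1) + c * ((1 - η) / (1 - p) - 1) = 0 := by
    field_simp; linear_combination (η - p) * hac
  nlinarith [mul_le_mul_of_nonneg_left hη ha, mul_le_mul_of_nonneg_left h1 hc]

lemma pow_mul_one_sub_pow_le_mul_rpow (i j : ℕ) {p η : ℝ} (hp0 : 0 < p) (hp1 : p < 1)
    (hη0 : 0 < η) (hη1 : η < 1) :
    η ^ i * (1 - η) ^ j ≤
      p ^ i * (1 - p) ^ j / p ^ ((i : ℝ) - j * p / (1 - p)) * η ^ ((i : ℝ) - j * p / (1 - p)) := by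
  set a : ℝ := j * p / (1 - p) with ha_def
  have h1p : 0 < 1 - p := by linarith
  have hsplit : ∀ x : ℝ, 0 < x → x ^ i = x ^ ((i : ℝ) - a) * x ^ a := fun x hx => by
    rw [← rpow_add hx, sub_add_cancel, rpow_natCast]
  have hmax : η ^ a * (1 - η) ^ (j : ℝ) ≤ p ^ a * (1 - p) ^ (j : ℝ) :=
    rpow_mul_one_sub_rpow_le (by positivity) j.cast_nonneg hp0 hp1 hη0 hη1
      (by rw [ha_def]; field_simp)
  rw [rpow_natCast, rpow_natCast] at hmax
  calc η ^ i * (1 - η) ^ j = η ^ ((i : ℝ) - a) * (η ^ a * (1 - η) ^ j) := by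
        rw [hsplit η hη0]; ring
    _ ≤ η ^ ((i : ℝ) - a) * (p ^ a * (1 - p) ^ j) := by gcongr
    _ = _ := by
        rw [hsplit p hp0]
        field_simp [(rpow_pos_of_pos hp0 ((i : ℝ) - a)).ne']

lemma integral_rpow_zero_left {p m : ℝ} (hm : -1 < m) :
    ∫ η in (0 : ℝ)..p, η ^ m = p ^ (m + 1) / (m + 1) := by
  rw [integral_rpow (Or.inl hm), zero_rpow (by linarith), sub_zero]

theorem integral_pow_mul_one_sub_pow_le (i j : ℕ) {p : ℝ} (hp0 : 0 < p) (hp1 : p < 1)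
    (hij : j * p < (i + 1) * (1 - p)) :
    ∫ η in (0 : ℝ)..p, η ^ i * (1 - η) ^ j ≤
      p * (1 - p) / ((i + 1) * (1 - p) - j * p) * (p ^ i * (1 - p) ^ j) := by
  set m : ℝ := (i : ℝ) - j * p / (1 - p) with hm_def
  have h1p : 0 < 1 - p := by linarith
  have hm1 : (1 - p) * (m + 1) = (i + 1) * (1 - p) - j * p := by
    rw [hm_def]; field_simp; ring
  have hm : -1 < m := by nlinarith
  set C : ℝ := p ^ i * (1 - p) ^ j / p ^ m
  calc ∫ η in (0 : ℝ)..p, η ^ i * (1 - η) ^ j ≤ ∫ η in (0 : ℝ)..p, C * η ^ m := by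
        refine integral_mono_on_of_le_Ioo hp0.le (by apply Continuous.intervalIntegrable; fun_prop)
          ((intervalIntegrable_rpow' hm).const_mul C) fun η hη => ?_
        exact pow_mul_one_sub_pow_le_mul_rpow i j hp0 hp1 hη.1 (hη.2.trans hp1)
    _ = C * (p ^ (m + 1) / (m + 1)) := by
        rw [integral_const_mul, integral_rpow_zero_left hm]
    _ = p * (1 - p) / ((i + 1) * (1 - p) - j * p) * (p ^ i * (1 - p) ^ j) := by
        rw [← hm1, rpow_add_one hp0.ne']
        simp only [C]
        field_simp [(rpow_pos_of_pos hp0 m).ne']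

theorem integral_tail_bound_general (p ε : ℝ) (hp0 : 0 < p) (hp1 : p < 1) (hε0 : 0 < ε)
    (n k : ℕ) (hn : 2 ≤ n) (hkn : k ≤ n) (hk : (1 + ε) * ((n : ℝ) - 1) * p + 1 ≤ k) :
    ∫ η in (0:ℝ)..p, η ^ (k - 1) * (1 - η) ^ (n - k)
      ≤ (1 - p) / (((n : ℝ) - 1) * ε) * p ^ (k - 1) * (1 - p) ^ (n - k) := by
  have hn1 : (1 : ℝ) ≤ n - 1 := by
    have : (2 : ℝ) ≤ n := by exact_mod_cast hn
    linarith
  have hk1 : 1 ≤ k := by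
    have : 0 ≤ (1 + ε) * ((n : ℝ) - 1) * p := by positivity
    exact_mod_cast (by linarith : (1 : ℝ) ≤ k)
  have hgap : ε * (n - 1) * p ≤ ((k - 1 : ℕ) + 1) * (1 - p) - (n - k : ℕ) * p := by
    push_cast [Nat.cast_sub hk1, Nat.cast_sub hkn]; nlinarith
  have hgap_pos : 0 < ε * (n - 1) * p := by positivity
  calc ∫ η in (0:ℝ)..p, η ^ (k - 1) * (1 - η) ^ (n - k)
      ≤ p * (1 - p) / (((k - 1 : ℕ) + 1) * (1 - p) - (n - k : ℕ) * p) *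
          (p ^ (k - 1) * (1 - p) ^ (n - k)) :=
        integral_pow_mul_one_sub_pow_le _ _ hp0 hp1 (by linarith)
    _ ≤ p * (1 - p) / (ε * (n - 1) * p) * (p ^ (k - 1) * (1 - p) ^ (n - k)) := by
        gcongr
    _ = (1 - p) / (((n : ℝ) - 1) * ε) * p ^ (k - 1) * (1 - p) ^ (n - k) := by
        field_simp

theorem integral_tail_bound (p ε : ℝ) (hp0 : 0 < p) (hp1 : p < 1) (hε0 : 0 < ε) (hε1 : ε ≤ 1)
    (n k : ℕ) (hn : 2 ≤ n) (hkn : k ≤ n) (hk : (1 + ε) * ((n : ℝ) - 1) * p + 1 ≤ k) :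
    ∫ η in (0:ℝ)..p, η ^ (k - 1) * (1 - η) ^ (n - k)
      ≤ (1 - p) / (((n : ℝ) - 1) * ε) * p ^ (k - 1) * (1 - p) ^ (n - k) :=
  integral_tail_bound_general p ε hp0 hp1 hε0 n k hn hkn hk
end
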